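/- arXiv:2306.06714 — 2 statements merged into one kernel-verified Lean document; each statement's English description precedes it below -/
import Mathlib

section
/- For every n ≥ 4, the graph K_n^+ satisfies σ×_V(K_n^+) = 2 and σ×_E(K_n^+) = 1. -/
open SimpleGraph

/-- An `l`-track on `G`: a surjective function whose consecutive values are adjacent. -/
def IsTrack {V : Type*} (G : SimpleGraph V) {l : ℕ} (f : Fin l → V) : Prop :=
  Function.Surjective f ∧
    ∀ i : ℕ, ∀ hi : i + 1 < l, G.Adj (f ⟨i, Nat.lt_of_succ_lt hi⟩) (f ⟨i + 1, hi⟩)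

/-- A lazy `l`-track on `G`: consecutive values are adjacent or equal. -/
def IsLazyTrack {V : Type*} (G : SimpleGraph V) {l : ℕ} (f : Fin l → V) : Prop :=
  Function.Surjective f ∧
    ∀ i : ℕ, ∀ hi : i + 1 < l,
      G.Adj (f ⟨i, Nat.lt_of_succ_lt hi⟩) (f ⟨i + 1, hi⟩) ∨
        f ⟨i, Nat.lt_of_succ_lt hi⟩ = f ⟨i + 1, hi⟩

/-- The condition that every edge of `G` is traversed by `f`. -/
def SweepCond {V : Type*} (G : SimpleGraph V) {l : ℕ} (f : Fin l → V) : Prop :=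
  ∀ e ∈ G.edgeSet, ∃ i : ℕ, ∃ hi : i + 1 < l,
    e = s(f ⟨i, Nat.lt_of_succ_lt hi⟩, f ⟨i + 1, hi⟩)

/-- An `l`-sweep on `G`: an `l`-track traversing every edge. -/
def IsSweep {V : Type*} (G : SimpleGraph V) {l : ℕ} (f : Fin l → V) : Prop :=
  IsTrack G f ∧ SweepCond G f

/-- A lazy `l`-sweep on `G`: a lazy `l`-track traversing every edge. -/
def IsLazySweep {V : Type*} (G : SimpleGraph V) {l : ℕ} (f : Fin l → V) : Prop :=
  IsLazyTrack G f ∧ SweepCond G f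

/-- `f` and `g` are opposite: at each step exactly `f` moves iff `g` stays. -/
def IsOpposite {V : Type*} (G : SimpleGraph V) {l : ℕ} (f g : Fin l → V) : Prop :=
  ∀ i : ℕ, ∀ hi : i + 1 < l,
    (G.Adj (f ⟨i, Nat.lt_of_succ_lt hi⟩) (f ⟨i + 1, hi⟩) ↔
      g ⟨i, Nat.lt_of_succ_lt hi⟩ = g ⟨i + 1, hi⟩)

/-- The distance `m_G(f,g)`: minimal distance between simultaneous positions. -/
noncomputable def mDist {V : Type*} (G : SimpleGraph V) {l : ℕ} (f g : Fin l → V) : ℕ :=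
  sInf {d | ∃ i : Fin l, G.dist (f i) (g i) = d}

/-- Strong vertex span `σ⊠_V(G)`. -/
noncomputable def strongVertexSpan {V : Type*} (G : SimpleGraph V) : ℕ :=
  sSup {d | ∃ (l : ℕ) (f g : Fin l → V), IsLazyTrack G f ∧ IsLazyTrack G g ∧ mDist G f g = d}

/-- Direct vertex span `σ×_V(G)`. -/
noncomputable def directVertexSpan {V : Type*} (G : SimpleGraph V) : ℕ :=
  sSup {d | ∃ (l : ℕ) (f g : Fin l → V), IsTrack G f ∧ IsTrack G g ∧ mDist G f g = d}

/-- Cartesian vertex span `σ□_V(G)`. -/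
noncomputable def cartesianVertexSpan {V : Type*} (G : SimpleGraph V) : ℕ :=
  sSup {d | ∃ (l : ℕ) (f g : Fin l → V),
    IsLazyTrack G f ∧ IsLazyTrack G g ∧ IsOpposite G f g ∧ mDist G f g = d}

/-- Strong edge span `σ⊠_E(G)`. -/
noncomputable def strongEdgeSpan {V : Type*} (G : SimpleGraph V) : ℕ :=
  sSup {d | ∃ (l : ℕ) (f g : Fin l → V), IsLazySweep G f ∧ IsLazySweep G g ∧ mDist G f g = d}

/-- Direct edge span `σ×_E(G)`. -/
noncomputable def directEdgeSpan {V : Type*} (G : SimpleGraph V) : ℕ :=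
  sSup {d | ∃ (l : ℕ) (f g : Fin l → V), IsSweep G f ∧ IsSweep G g ∧ mDist G f g = d}

/-- Cartesian edge span `σ□_E(G)`. -/
noncomputable def cartesianEdgeSpan {V : Type*} (G : SimpleGraph V) : ℕ :=
  sSup {d | ∃ (l : ℕ) (f g : Fin l → V),
    IsLazySweep G f ∧ IsLazySweep G g ∧ IsOpposite G f g ∧ mDist G f g = d}

/-- `L⊠_V(G)`: minimal length of lazy tracks realizing the strong vertex span. -/
noncomputable def strongVertexL {V : Type*} (G : SimpleGraph V) : ℕ :=
  sInf {l | ∃ f g : Fin l → V,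
    IsLazyTrack G f ∧ IsLazyTrack G g ∧ mDist G f g = strongVertexSpan G}

/-- `L×_V(G)`. -/
noncomputable def directVertexL {V : Type*} (G : SimpleGraph V) : ℕ :=
  sInf {l | ∃ f g : Fin l → V,
    IsTrack G f ∧ IsTrack G g ∧ mDist G f g = directVertexSpan G}

/-- `L□_V(G)`. -/
noncomputable def cartesianVertexL {V : Type*} (G : SimpleGraph V) : ℕ :=
  sInf {l | ∃ f g : Fin l → V,
    IsLazyTrack G f ∧ IsLazyTrack G g ∧ IsOpposite G f g ∧ mDist G f g = cartesianVertexSpan G}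

/-- `L⊠_E(G)`. -/
noncomputable def strongEdgeL {V : Type*} (G : SimpleGraph V) : ℕ :=
  sInf {l | ∃ f g : Fin l → V,
    IsLazySweep G f ∧ IsLazySweep G g ∧ mDist G f g = strongEdgeSpan G}

/-- `L×_E(G)`. -/
noncomputable def directEdgeL {V : Type*} (G : SimpleGraph V) : ℕ :=
  sInf {l | ∃ f g : Fin l → V,
    IsSweep G f ∧ IsSweep G g ∧ mDist G f g = directEdgeSpan G}

/-- `L□_E(G)`. -/
noncomputable def cartesianEdgeL {V : Type*} (G : SimpleGraph V) : ℕ :=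
  sInf {l | ∃ f g : Fin l → V,
    IsLazySweep G f ∧ IsLazySweep G g ∧ IsOpposite G f g ∧ mDist G f g = cartesianEdgeSpan G}

/-- `K_n^+`: the complete graph `K_n` (on `Fin n`, with `v_1 = 0` and `v_n = n-1`)
with the edge `v_1 v_n` subdivided through the new vertex `w = Sum.inr ()`. -/
def KnPlus (n : ℕ) : SimpleGraph (Fin n ⊕ Unit) :=
  SimpleGraph.fromRel (fun a b =>
    match a, b with
    | Sum.inl i, Sum.inl j =>
        ¬((i.val = 0 ∧ j.val = n - 1) ∨ (i.val = n - 1 ∧ j.val = 0))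
    | Sum.inl i, Sum.inr _ => i.val = 0 ∨ i.val = n - 1
    | Sum.inr _, _ => False)

/-
The distance between any two vertices of `K_n^+` is at most `2`, and two tracks can keep
distance exactly `2` forever: both run around the 4-cycles `v_1 w v_n v_m` (one inner vertex
`v_m` after the other), two steps apart, so that they always sit at opposite corners.

Sweeps cannot keep distance `2`: some sweep step runs along the edge `v_2 v_3` between two inner
vertices, and the only vertex at distance `2` from an inner vertex is `w`, so the other track
would have to stay at `w` for two consecutive steps. Distance `1` is attained in any connected
finite graph with an edge: both sweeps go once around a closed walk through every edge, the
second one step ahead of the first.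
-/

namespace SimpleGraph

variable {V : Type*} {G : SimpleGraph V}

lemma dist_eq_two_of_adj_of_adj {a b c : V} (hne : a ≠ b) (hab : ¬G.Adj a b)
    (hac : G.Adj a c) (hcb : G.Adj c b) : G.dist a b = 2 := by
  have : G.edist a b = 2 :=
    edist_eq_two_iff.mpr ⟨hne, hab, c, G.mem_commonNeighbors.mpr ⟨hac, hcb.symm⟩⟩
  simp [dist, this]

section Spans

variable {l : ℕ} {f g : Fin l → V}

lemma mDist_le_dist (i : Fin l) : mDist G f g ≤ G.dist (f i) (g i) :=
  Nat.sInf_le ⟨i, rfl⟩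

lemma mDist_eq_of_forall_dist_eq {d : ℕ} (i₀ : Fin l) (h : ∀ i, G.dist (f i) (g i) = d) :
    mDist G f g = d :=
  le_antisymm (h i₀ ▸ mDist_le_dist i₀)
    (le_csInf ⟨_, i₀, rfl⟩ (by rintro _ ⟨i, rfl⟩; exact (h i).ge))

lemma directVertexSpan_eq {d : ℕ}
    (hle : ∀ (l : ℕ) (f g : Fin l → V), IsTrack G f → IsTrack G g → mDist G f g ≤ d)
    (hex : ∃ (l : ℕ) (f g : Fin l → V), IsTrack G f ∧ IsTrack G g ∧ mDist G f g = d) :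
    directVertexSpan G = d :=
  IsGreatest.csSup_eq ⟨hex, by rintro _ ⟨l, f, g, hf, hg, rfl⟩; exact hle l f g hf hg⟩

lemma directEdgeSpan_eq {d : ℕ}
    (hle : ∀ (l : ℕ) (f g : Fin l → V), IsSweep G f → IsSweep G g → mDist G f g ≤ d)
    (hex : ∃ (l : ℕ) (f g : Fin l → V), IsSweep G f ∧ IsSweep G g ∧ mDist G f g = d) :
    directEdgeSpan G = d :=
  IsGreatest.csSup_eq ⟨hex, by rintro _ ⟨l, f, g, hf, hg, rfl⟩; exact hle l f g hf hg⟩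

lemma isTrack_shift {c : ℕ → V} {s : ℕ} (hadj : ∀ k, G.Adj (c k) (c (k + 1)))
    (hsurj : ∀ v, ∃ k < l, c (k + s) = v) : IsTrack G (fun k : Fin l => c (k + s)) :=
  ⟨fun v => let ⟨k, hk, h⟩ := hsurj v; ⟨⟨k, hk⟩, h⟩,
    fun i _ => by simpa only [add_right_comm] using hadj (i + s)⟩

end Spans

namespace Walk

variable {u : V} (p : G.Walk u u)

def periodicVert (k : ℕ) : V := p.getVert (k % p.length)

lemma periodicVert_of_le {k : ℕ} (hk : k ≤ p.length) : p.periodicVert k = p.getVert k := by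
  rcases hk.lt_or_eq with hk | rfl
  · rw [periodicVert, Nat.mod_eq_of_lt hk]
  · rw [periodicVert, Nat.mod_self, getVert_zero, getVert_length]

lemma periodicVert_add_length (k : ℕ) : p.periodicVert (k + p.length) = p.periodicVert k := by
  rw [periodicVert, periodicVert, Nat.add_mod_right]

lemma adj_periodicVert_succ (hp : 0 < p.length) (k : ℕ) :
    G.Adj (p.periodicVert k) (p.periodicVert (k + 1)) := by
  have hlt := Nat.mod_lt k hp
  have hsucc : p.periodicVert (k + 1) = p.getVert (k % p.length + 1) := by
    rw [periodicVert, ← Nat.mod_add_mod, ← periodicVert, periodicVert_of_le _ hlt]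
  rw [hsucc]
  exact p.adj_getVert_succ hlt

lemma exists_periodicVert_shift_eq {s i : ℕ} (hs : s ≤ p.length) (hi : i < p.length) :
    ∃ k < p.length, p.periodicVert (k + s) = p.getVert i ∧
      p.periodicVert (k + s + 1) = p.getVert (i + 1) := by
  by_cases hsi : s ≤ i
  · refine ⟨i - s, by omega, ?_⟩
    rw [Nat.sub_add_cancel hsi, periodicVert_of_le _ hi.le, periodicVert_of_le _ hi]
    exact ⟨rfl, rfl⟩
  · refine ⟨i + p.length - s, by omega, ?_⟩
    rw [show i + p.length - s + s = i + p.length by omega,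
      show i + p.length + 1 = i + 1 + p.length by omega, periodicVert_add_length,
      periodicVert_add_length, periodicVert_of_le _ hi.le, periodicVert_of_le _ hi]
    exact ⟨rfl, rfl⟩

theorem isSweep_periodicVert_shift (hp : 0 < p.length) (hsupp : ∀ v, v ∈ p.support)
    (hedges : ∀ e ∈ G.edgeSet, e ∈ p.edges) {s : ℕ} (hs : s ≤ p.length) :
    IsSweep G (fun k : Fin (p.length + 1) => p.periodicVert (k + s)) := by
  refine ⟨isTrack_shift (p.adj_periodicVert_succ hp) fun v => ?_, fun e he => ?_⟩
  · obtain ⟨i, rfl, hi⟩ := mem_support_iff_exists_getVert.mp (hsupp v)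
    rcases hi.lt_or_eq with hi | rfl
    · obtain ⟨k, hk, h, -⟩ := p.exists_periodicVert_shift_eq hs hi
      exact ⟨k, by omega, h⟩
    · obtain ⟨k, hk, -, h⟩ := p.exists_periodicVert_shift_eq hs (Nat.sub_lt hp one_pos)
      rw [show p.length - 1 + 1 = p.length by omega] at h
      exact ⟨k + 1, by omega, by rwa [add_right_comm]⟩
  · induction e with
    | h a b =>
      obtain ⟨i, hi, he⟩ := (mk_mem_edges_iff_exists p).mp (hedges _ he)
      obtain ⟨k, hk, h₁, h₂⟩ := p.exists_periodicVert_shift_eq hs hi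
      refine ⟨k, by omega, ?_⟩
      change _ = s(p.periodicVert (k + s), p.periodicVert (k + 1 + s))
      rw [add_right_comm, h₁, h₂, he]

end Walk

lemma exists_walk_forall_mem_edges (hG : G.Preconnected) (u : V) (es : List (Sym2 V))
    (hes : ∀ e ∈ es, e ∈ G.edgeSet) : ∃ p : G.Walk u u, ∀ e ∈ es, e ∈ p.edges := by
  induction es with
  | nil => exact ⟨.nil, by simp⟩
  | cons e es ih =>
    obtain ⟨p, hp⟩ := ih fun e' he' => hes e' (List.mem_cons_of_mem _ he')
    induction e with
    | h a b =>
      obtain ⟨q₁⟩ := hG u a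
      obtain ⟨q₂⟩ := hG b u
      have hab : G.Adj a b := hes _ List.mem_cons_self
      refine ⟨q₁.append (.cons hab (q₂.append p)), fun e' he' => ?_⟩
      rcases List.mem_cons.mp he' with rfl | he'
      · simp [Walk.edges_append, Walk.edges_cons]
      · simp [Walk.edges_append, Walk.edges_cons, hp e' he']

lemma exists_walk_forall_mem_edgeSet [Finite V] (hG : G.Preconnected) (u : V) :
    ∃ p : G.Walk u u, ∀ e ∈ G.edgeSet, e ∈ p.edges :=
  let ⟨p, hp⟩ := exists_walk_forall_mem_edges hG u G.edgeSet.toFinite.toFinset.toList (by simp)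
  ⟨p, fun e he => hp e (by simpa using he)⟩

theorem exists_isSweep_mDist_eq_one [Finite V] (hG : G.Connected) {a b : V} (hab : G.Adj a b) :
    ∃ (l : ℕ) (f g : Fin l → V), IsSweep G f ∧ IsSweep G g ∧ mDist G f g = 1 := by
  obtain ⟨p, hp⟩ := exists_walk_forall_mem_edgeSet hG.preconnected a
  have : Nontrivial V := ⟨a, b, hab.ne⟩
  have hsupp : ∀ v, v ∈ p.support := fun v =>
    let ⟨_, hw⟩ := hG.preconnected.exists_adj_of_nontrivial v
    p.fst_mem_support_of_mem_edges (hp _ hw)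
  have hlen : 0 < p.length := by
    obtain ⟨i, hi, -⟩ := (Walk.mk_mem_edges_iff_exists p).mp (hp _ hab)
    omega
  refine ⟨_, _, _, p.isSweep_periodicVert_shift hlen hsupp hp (Nat.zero_le _),
    p.isSweep_periodicVert_shift hlen hsupp hp hlen, mDist_eq_of_forall_dist_eq 0 fun k => ?_⟩
  exact dist_eq_one_iff_adj.mpr (p.adj_periodicVert_succ hlen k)

end SimpleGraph

namespace KnPlus

variable {n : ℕ}

lemma adj_inl_inl {i j : Fin n} :
    (KnPlus n).Adj (.inl i) (.inl j) ↔
      i ≠ j ∧ ¬((i.val = 0 ∧ j.val = n - 1) ∨ (i.val = n - 1 ∧ j.val = 0)) := by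
  rw [KnPlus, fromRel_adj]
  simp only [ne_eq, Sum.inl.injEq]
  tauto

lemma adj_inl_inr {i : Fin n} :
    (KnPlus n).Adj (.inl i) (.inr ()) ↔ i.val = 0 ∨ i.val = n - 1 := by
  rw [KnPlus, fromRel_adj]
  simp only [ne_eq, reduceCtorEq, not_false_eq_true, true_and]
  tauto

lemma adj_inr_inl {i : Fin n} :
    (KnPlus n).Adj (.inr ()) (.inl i) ↔ i.val = 0 ∨ i.val = n - 1 := by
  rw [adj_comm, adj_inl_inr]

lemma not_adj_inr_inr : ¬(KnPlus n).Adj (.inr ()) (.inr ()) := by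
  rw [KnPlus, fromRel_adj]
  tauto

lemma exists_walk_inl_length_le_two (i : Fin n) (b : Fin n ⊕ Unit) :
    ∃ p : (KnPlus n).Walk (.inl i) b, p.length ≤ 2 := by
  rcases b with j | ⟨⟩
  · by_cases hij : i = j
    · subst hij
      exact ⟨.nil, by simp⟩
    by_cases hadj : (KnPlus n).Adj (.inl i) (.inl j)
    · exact ⟨.cons hadj .nil, by simp⟩
    -- the only non-adjacent pair of distinct `v_i`s is `v_1, v_n`, joined through `w`
    have hends : (i.val = 0 ∨ i.val = n - 1) ∧ (j.val = 0 ∨ j.val = n - 1) := by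
      rw [adj_inl_inl] at hadj
      omega
    exact ⟨.cons (adj_inl_inr.mpr hends.1) (.cons (adj_inr_inl.mpr hends.2) .nil), by simp⟩
  · by_cases hi : i.val = 0 ∨ i.val = n - 1
    · exact ⟨.cons (adj_inl_inr.mpr hi) .nil, by simp⟩
    have h0 : (KnPlus n).Adj (.inl i) (.inl ⟨0, by omega⟩) :=
      adj_inl_inl.mpr ⟨by simp [Fin.ext_iff]; omega, by omega⟩
    exact ⟨.cons h0 (.cons (adj_inl_inr.mpr (.inl rfl)) .nil), by simp⟩

lemma exists_walk_length_le_two (a b : Fin n ⊕ Unit) :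
    ∃ p : (KnPlus n).Walk a b, p.length ≤ 2 := by
  rcases a with i | ⟨⟩
  · exact exists_walk_inl_length_le_two i b
  rcases b with j | ⟨⟩
  · obtain ⟨p, hp⟩ := exists_walk_inl_length_le_two j (.inr ())
    exact ⟨p.reverse, by simpa⟩
  · exact ⟨.nil, by simp⟩

lemma connected : (KnPlus n).Connected where
  preconnected a b := let ⟨p, _⟩ := exists_walk_length_le_two a b; ⟨p⟩

lemma dist_le_two (a b : Fin n ⊕ Unit) : (KnPlus n).dist a b ≤ 2 :=
  let ⟨p, hp⟩ := exists_walk_length_le_two a b; (dist_le p).trans hp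

lemma dist_inl_zero_inl_last (hn : 2 ≤ n) :
    (KnPlus n).dist (.inl ⟨0, by omega⟩) (.inl ⟨n - 1, by omega⟩) = 2 :=
  dist_eq_two_of_adj_of_adj (by simp [Fin.ext_iff]; omega) (by simp [adj_inl_inl])
    (adj_inl_inr.mpr (.inl rfl)) (adj_inr_inl.mpr (.inr rfl))

lemma dist_inr_inl {m : Fin n} (h0 : m.val ≠ 0) (hlast : m.val ≠ n - 1) :
    (KnPlus n).dist (.inr ()) (.inl m) = 2 :=
  dist_eq_two_of_adj_of_adj (c := .inl ⟨0, by omega⟩) (by simp) (by simp [adj_inr_inl]; omega)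
    (adj_inr_inl.mpr (.inl rfl)) (adj_inl_inl.mpr ⟨by simp [Fin.ext_iff, h0.symm], by omega⟩)

lemma eq_inr_of_two_le_dist {m : Fin n} (h0 : m.val ≠ 0) (hlast : m.val ≠ n - 1)
    {x : Fin n ⊕ Unit} (h : 2 ≤ (KnPlus n).dist (.inl m) x) : x = .inr () := by
  rcases x with j | ⟨⟩
  · by_cases hmj : m = j
    · simp [hmj] at h
    · rw [dist_eq_one_iff_adj.mpr (adj_inl_inl.mpr ⟨hmj, by omega⟩)] at h
      omega
  · rfl

/-- Round `j` runs around the 4-cycle `v_1 w v_n v_{j+2}` (0-based: `0, w, n-1, j+1`), with the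
inner vertex clamped at `n-2` once all of them have been visited. -/
def squareTour (hn : 3 ≤ n) (k : ℕ) : Fin n ⊕ Unit :=
  match k % 4 with
  | 0 => .inl ⟨0, by omega⟩
  | 1 => .inr ()
  | 2 => .inl ⟨n - 1, by omega⟩
  | _ => .inl ⟨min (k / 4 + 1) (n - 2), by omega⟩

section

variable (hn : 3 ≤ n)

lemma adj_squareTour_succ (k : ℕ) : (KnPlus n).Adj (squareTour hn k) (squareTour hn (k + 1)) := by
  have : k % 4 = 0 ∨ k % 4 = 1 ∨ k % 4 = 2 ∨ k % 4 = 3 := by omega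
  rcases this with h | h | h | h <;>
    simp only [squareTour, h, show (k + 1) % 4 = (k % 4 + 1) % 4 by omega, adj_inl_inl,
      adj_inl_inr, adj_inr_inl] <;> simp [Fin.ext_iff] <;> omega

lemma dist_squareTour_add_two (k : ℕ) :
    (KnPlus n).dist (squareTour hn k) (squareTour hn (k + 2)) = 2 := by
  have : k % 4 = 0 ∨ k % 4 = 1 ∨ k % 4 = 2 ∨ k % 4 = 3 := by omega
  rcases this with h | h | h | h <;>
    simp only [squareTour, h, show (k + 2) % 4 = (k % 4 + 2) % 4 by omega]
  · exact dist_inl_zero_inl_last (by omega)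
  · exact dist_inr_inl (by simp; omega) (by simp; omega)
  · rw [SimpleGraph.dist_comm]
    exact dist_inl_zero_inl_last (by omega)
  · rw [SimpleGraph.dist_comm]
    exact dist_inr_inl (by simp; omega) (by simp; omega)

lemma exists_squareTour_eq (v : Fin n ⊕ Unit) :
    ∃ j, 2 ≤ j ∧ j < 4 * (n - 2) + 2 ∧ squareTour hn j = v := by
  rcases v with m | ⟨⟩
  · by_cases h0 : m.val = 0
    · exact ⟨4, by omega, by omega, by simp [squareTour, Fin.ext_iff, h0]⟩
    by_cases hlast : m.val = n - 1
    · exact ⟨2, by omega, by omega, by simp [squareTour, Fin.ext_iff, hlast]⟩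
    refine ⟨4 * (m.val - 1) + 3, by omega, by omega, ?_⟩
    simp [squareTour, Fin.ext_iff, show (4 * (m.val - 1) + 3) % 4 = 3 by omega]
    omega
  · exact ⟨5, by omega, by omega, by simp [squareTour]⟩

lemma isTrack_squareTour_shift {s : ℕ} (hs : s ≤ 2) :
    IsTrack (KnPlus n) (fun k : Fin (4 * (n - 2) + 2) => squareTour hn (k + s)) :=
  isTrack_shift (adj_squareTour_succ hn) fun v =>
    let ⟨j, h2, hj, h⟩ := exists_squareTour_eq hn v
    ⟨j - s, by omega, by rwa [Nat.sub_add_cancel (hs.trans h2)]⟩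

end

theorem directVertexSpan_eq_two (hn : 3 ≤ n) : directVertexSpan (KnPlus n) = 2 := by
  refine directVertexSpan_eq (fun l f g hf _ => ?_) ⟨_, _, _, isTrack_squareTour_shift hn
    (Nat.zero_le 2), isTrack_squareTour_shift hn le_rfl, mDist_eq_of_forall_dist_eq 0 fun k => ?_⟩
  · obtain ⟨i, -⟩ := hf.1 (.inr ())
    exact (mDist_le_dist i).trans (dist_le_two _ _)
  · exact dist_squareTour_add_two hn k

lemma mDist_le_one (hn : 4 ≤ n) {l : ℕ} {f g : Fin l → Fin n ⊕ Unit}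
    (hf : SweepCond (KnPlus n) f) (hg : IsTrack (KnPlus n) g) : mDist (KnPlus n) f g ≤ 1 := by
  by_contra! h
  have hw : ∀ j, f j ∈ s(.inl ⟨1, by omega⟩, .inl ⟨2, by omega⟩) → g j = .inr () := by
    intro j hj
    have hfar : 2 ≤ (KnPlus n).dist (f j) (g j) := h.trans_le (mDist_le_dist j)
    rcases Sym2.mem_iff.mp hj with hj | hj <;> rw [hj] at hfar <;>
      exact eq_inr_of_two_le_dist (by simp) (by simp; omega) hfar
  have hedge : s(.inl ⟨1, by omega⟩, .inl ⟨2, by omega⟩) ∈ (KnPlus n).edgeSet :=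
    adj_inl_inl.mpr ⟨by simp, by simp⟩
  obtain ⟨i, hi, he⟩ := hf _ hedge
  have hg₁ := hw _ (by rw [he]; exact Sym2.mem_mk_left _ _)
  have hg₂ := hw ⟨i + 1, hi⟩ (by rw [he]; exact Sym2.mem_mk_right _ _)
  exact not_adj_inr_inr (hg₁ ▸ hg₂ ▸ hg.2 i hi)

theorem directEdgeSpan_eq_one (hn : 4 ≤ n) : directEdgeSpan (KnPlus n) = 1 :=
  directEdgeSpan_eq (fun _ _ _ hf hg => mDist_le_one hn hf.2 hg.1)
    (exists_isSweep_mDist_eq_one connected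
      (adj_inl_inr.mpr (.inl rfl) : (KnPlus n).Adj (.inl ⟨0, by omega⟩) (.inr ())))

end KnPlus

theorem stmt7 (n : ℕ) (hn : 4 ≤ n) :
    directVertexSpan (KnPlus n) = 2 ∧ directEdgeSpan (KnPlus n) = 1 :=
  ⟨KnPlus.directVertexSpan_eq_two (by omega), KnPlus.directEdgeSpan_eq_one hn⟩
end

section
/- If G is a tree (a finite connected acyclic simple graph), then L⊠_V(G)=L⊠_E(G), L×_V(G)=L×_E(G), and L□_V(G)=L□_E(G). -/
open SimpleGraph

/-! In a forest every edge is a bridge. A lazy track visits both endpoints of every edge, and if it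
never crossed a bridge `uv`, its consecutive values would stay connected in `G - uv`, joining `u` to
`v` there. Hence on a forest lazy tracks are automatically lazy sweeps (and tracks sweeps), so the
vertex and edge versions of every span, and of every minimal length, are the same quantity. -/

section Forest

variable {V : Type*} {G : SimpleGraph V} {l : ℕ} {f : Fin l → V}

theorem SimpleGraph.reachable_of_lazy_steps
    (hf : ∀ i : ℕ, ∀ hi : i + 1 < l,
      G.Adj (f ⟨i, Nat.lt_of_succ_lt hi⟩) (f ⟨i + 1, hi⟩) ∨
        f ⟨i, Nat.lt_of_succ_lt hi⟩ = f ⟨i + 1, hi⟩)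
    (i j : Fin l) : G.Reachable (f i) (f j) := by
  have from_zero : ∀ n : ℕ, ∀ hn : n < l, G.Reachable (f ⟨0, i.pos⟩) (f ⟨n, hn⟩) := by
    intro n
    induction n with
    | zero => exact fun _ => .rfl
    | succ m ih =>
      intro hn
      refine (ih (Nat.lt_of_succ_lt hn)).trans ?_
      rcases hf m hn with hadj | heq
      · exact hadj.reachable
      · rw [heq]
  exact (from_zero i i.2).symm.trans (from_zero j j.2)

theorem IsLazyTrack.exists_step_eq_of_isBridge (hf : IsLazyTrack G f) {e : Sym2 V}
    (he : G.IsBridge e) :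
    ∃ i : ℕ, ∃ hi : i + 1 < l, e = s(f ⟨i, Nat.lt_of_succ_lt hi⟩, f ⟨i + 1, hi⟩) := by
  induction e using Sym2.ind with
  | _ u v =>
  by_contra! never_crossed
  obtain ⟨i, rfl⟩ := hf.1 u
  obtain ⟨j, rfl⟩ := hf.1 v
  refine isBridge_iff.mp he (reachable_of_lazy_steps (fun m hm => ?_) i j)
  rcases hf.2 m hm with hadj | heq
  · refine .inl ((deleteEdges_adj ..).mpr ⟨hadj, fun h => never_crossed m hm ?_⟩)
    exact (Set.mem_singleton_iff.mp h).symm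
  · exact .inr heq

theorem IsLazyTrack.sweepCond_of_isAcyclic (hG : G.IsAcyclic) (hf : IsLazyTrack G f) :
    SweepCond G f :=
  fun _ he => hf.exists_step_eq_of_isBridge (isAcyclic_iff_forall_isBridge.mp hG he)

theorem IsTrack.isLazyTrack (hf : IsTrack G f) : IsLazyTrack G f :=
  ⟨hf.1, fun i hi => .inl (hf.2 i hi)⟩

theorem isLazySweep_iff_of_isAcyclic (hG : G.IsAcyclic) : IsLazySweep G f ↔ IsLazyTrack G f :=
  ⟨And.left, fun hf => ⟨hf, hf.sweepCond_of_isAcyclic hG⟩⟩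

theorem isSweep_iff_of_isAcyclic (hG : G.IsAcyclic) : IsSweep G f ↔ IsTrack G f :=
  ⟨And.left, fun hf => ⟨hf, hf.isLazyTrack.sweepCond_of_isAcyclic hG⟩⟩

end Forest

theorem stmt11_general {V : Type*} (G : SimpleGraph V) (hG : G.IsTree) :
    strongVertexL G = strongEdgeL G ∧
      directVertexL G = directEdgeL G ∧
        cartesianVertexL G = cartesianEdgeL G := by
  simp only [strongVertexL, strongEdgeL, directVertexL, directEdgeL, cartesianVertexL,
    cartesianEdgeL, strongVertexSpan, strongEdgeSpan, directVertexSpan, directEdgeSpan,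
    cartesianVertexSpan, cartesianEdgeSpan, isLazySweep_iff_of_isAcyclic hG.isAcyclic,
    isSweep_iff_of_isAcyclic hG.isAcyclic, and_self]

theorem stmt11 {V : Type*} [Fintype V] (G : SimpleGraph V) (hG : G.IsTree) :
    strongVertexL G = strongEdgeL G ∧
      directVertexL G = directEdgeL G ∧
        cartesianVertexL G = cartesianEdgeL G :=
  stmt11_general G hG
end
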